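/- arXiv:2101.00162 — 6 statements merged into one kernel-verified Lean document; each statement's English description precedes it below -/
import Mathlib

section
/- Let M be a positive semidefinite operator on a finite-dimensional complex Hilbert space and x a vector. Then M ≥ |x⟩⟨x| (i.e., M − |x⟩⟨x| is positive semidefinite) if and only if there exists a vector h with ⟨h|h⟩ ≤ 1 such that √M |h⟩⟨h| √M = |x⟩⟨x| (equivalently, √M h = x). -/
open Matrix
open scoped ComplexOrder

/-- The square root of a positive semidefinite matrix, as `Matrix.PosSemidef.sqrt` was defined
in older Mathlib (removed since). -/
noncomputable def Matrix.PosSemidef.sqrt {n : Type*} [Fintype n] [DecidableEq n]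
    {A : Matrix n n ℂ} (hA : A.PosSemidef) : Matrix n n ℂ :=
  (hA.1.eigenvectorUnitary : Matrix n n ℂ) * diagonal ((↑) ∘ Real.sqrt ∘ hA.1.eigenvalues) *
    (star (hA.1.eigenvectorUnitary : Matrix n n ℂ))

/-!
Write `M = S Sᴴ` with `S = √M`. Testing `M - |x⟩⟨x|` against `y` gives the condition
`|⟨x, y⟩|² ≤ ‖Sᴴ y‖²` for all `y`. If `x = S h` with `‖h‖ ≤ 1`, this is Cauchy–Schwarz for
`⟨h, Sᴴ y⟩`. Conversely, the condition makes `x` orthogonal to `ker (S Sᴴ)`, so `x = S Sᴴ y` for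
some `y`; then `h = Sᴴ y` satisfies `‖h‖² = ⟨x, y⟩`, and the condition at this `y` reads
`‖h‖⁴ ≤ ‖h‖²`.
-/

namespace Matrix.PosSemidef

variable {n : Type*} [Fintype n] [DecidableEq n] {A : Matrix n n ℂ}

theorem posSemidef_sqrt (hA : A.PosSemidef) : hA.sqrt.PosSemidef := by
  have hD : (diagonal ((↑) ∘ Real.sqrt ∘ hA.1.eigenvalues) : Matrix n n ℂ).PosSemidef :=
    PosSemidef.diagonal fun i => by simp
  exact hD.mul_mul_conjTranspose_same _

theorem sqrt_mul_self (hA : A.PosSemidef) : hA.sqrt * hA.sqrt = A := by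
  have hD : diagonal ((↑) ∘ Real.sqrt ∘ hA.1.eigenvalues) *
      diagonal ((↑) ∘ Real.sqrt ∘ hA.1.eigenvalues) =
      diagonal (RCLike.ofReal ∘ hA.1.eigenvalues : n → ℂ) := by
    rw [diagonal_mul_diagonal]
    congr 1 with i
    simp [← Complex.ofReal_mul, Real.mul_self_sqrt (hA.eigenvalues_nonneg i)]
  conv_rhs => rw [hA.1.spectral_theorem, Unitary.conjStarAlgAut_apply]
  simp only [sqrt, Matrix.mul_assoc]
  rw [← Matrix.mul_assoc (star _), Unitary.coe_star_mul_self, Matrix.one_mul,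
    ← Matrix.mul_assoc (diagonal _), hD]

end Matrix.PosSemidef

namespace Matrix

variable {m n : Type*} [Fintype m] [Fintype n]

theorem normSq_star_dotProduct_le (a b : n → ℂ) :
    Complex.normSq (star a ⬝ᵥ b) ≤
      (∑ i, Complex.normSq (a i)) * ∑ i, Complex.normSq (b i) := by
  have hnorm : ∀ v : n → ℂ, ∑ i, Complex.normSq (v i) = ‖WithLp.toLp 2 v‖ ^ 2 := fun v => by
    simp [EuclideanSpace.norm_sq_eq, Complex.normSq_eq_norm_sq]
  have hinner : star a ⬝ᵥ b = inner ℂ (WithLp.toLp 2 a) (WithLp.toLp 2 b) := by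
    rw [EuclideanSpace.inner_toLp_toLp, dotProduct_comm]
  rw [hnorm, hnorm, hinner, Complex.normSq_eq_norm_sq, ← mul_pow]
  exact pow_le_pow_left₀ (norm_nonneg _) (norm_inner_le_norm _ _) 2

theorem star_dotProduct_vecMulVec_mulVec (x y : n → ℂ) :
    star y ⬝ᵥ (vecMulVec x (star x) *ᵥ y) = (Complex.normSq (star x ⬝ᵥ y) : ℂ) := by
  rw [vecMulVec_mulVec, op_smul_eq_smul, dotProduct_smul, smul_eq_mul,
    Complex.normSq_eq_conj_mul_self, star_dotProduct y x, mul_comm]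
  rfl

theorem star_dotProduct_mul_conjTranspose_mulVec (S : Matrix m n ℂ) (y : m → ℂ) :
    star y ⬝ᵥ ((S * Sᴴ) *ᵥ y) = ((∑ i, Complex.normSq ((Sᴴ *ᵥ y) i) : ℝ) : ℂ) := by
  rw [← mulVec_mulVec, dotProduct_mulVec, ← conjTranspose_conjTranspose S, ← star_mulVec,
    conjTranspose_conjTranspose]
  simp [dotProduct, Complex.normSq_eq_conj_mul_self]

theorem exists_mulVec_eq_of_forall_conjTranspose_mulVec_eq_zero (A : Matrix m n ℂ)
    {x : m → ℂ} (hx : ∀ y, Aᴴ *ᵥ y = 0 → star x ⬝ᵥ y = 0) : ∃ y, A *ᵥ y = x := by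
  classical
  have hmem : WithLp.toLp 2 x ∈ (toEuclideanLin A).range := by
    rw [← (toEuclideanLin A).adjoint_adjoint, ← LinearMap.orthogonal_ker,
      ← toEuclideanLin_conjTranspose_eq_adjoint]
    refine (Submodule.mem_orthogonal' _ _).2 fun u hu => ?_
    rw [EuclideanSpace.inner_eq_star_dotProduct, dotProduct_comm]
    exact hx u.ofLp (congrArg WithLp.ofLp hu)
  obtain ⟨y, hy⟩ := hmem
  exact ⟨y.ofLp, congrArg WithLp.ofLp hy⟩

theorem posSemidef_mul_conjTranspose_sub_vecMulVec_iff_forall (S : Matrix m n ℂ) (x : m → ℂ) :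
    (S * Sᴴ - vecMulVec x (star x)).PosSemidef ↔
      ∀ y, Complex.normSq (star x ⬝ᵥ y) ≤ ∑ i, Complex.normSq ((Sᴴ *ᵥ y) i) := by
  have hHerm : (S * Sᴴ - vecMulVec x (star x)).IsHermitian :=
    (isHermitian_mul_conjTranspose_self S).sub (posSemidef_vecMulVec_self_star x).isHermitian
  simp only [posSemidef_iff_dotProduct_mulVec, hHerm, true_and, sub_mulVec, dotProduct_sub,
    star_dotProduct_mul_conjTranspose_mulVec, star_dotProduct_vecMulVec_mulVec,
    ← Complex.ofReal_sub, Complex.zero_le_real, sub_nonneg]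

theorem posSemidef_mul_conjTranspose_sub_vecMulVec_iff (S : Matrix m n ℂ) (x : m → ℂ) :
    (S * Sᴴ - vecMulVec x (star x)).PosSemidef ↔
      ∃ h : n → ℂ, (∑ i, Complex.normSq (h i)) ≤ 1 ∧ S *ᵥ h = x := by
  rw [posSemidef_mul_conjTranspose_sub_vecMulVec_iff_forall]
  constructor
  · intro hle
    obtain ⟨y, hy⟩ : ∃ y, (S * Sᴴ) *ᵥ y = x := by
      refine exists_mulVec_eq_of_forall_conjTranspose_mulVec_eq_zero _ fun y hy => ?_
      rw [conjTranspose_mul, conjTranspose_conjTranspose] at hy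
      have hSy : ∑ i, Complex.normSq ((Sᴴ *ᵥ y) i) = 0 := by
        have := star_dotProduct_mul_conjTranspose_mulVec S y
        rw [hy, dotProduct_zero] at this
        exact_mod_cast this.symm
      exact Complex.normSq_eq_zero.mp <|
        le_antisymm (hSy ▸ hle y) (Complex.normSq_nonneg _)
    refine ⟨Sᴴ *ᵥ y, ?_, by rw [mulVec_mulVec, hy]⟩
    set s := ∑ i, Complex.normSq ((Sᴴ *ᵥ y) i)
    have hxy : star x ⬝ᵥ y = s := by
      rw [star_dotProduct, ← hy, star_dotProduct_mul_conjTranspose_mulVec, Complex.star_def,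
        Complex.conj_ofReal]
    have hs : 0 ≤ s := Finset.sum_nonneg fun i _ => Complex.normSq_nonneg _
    have hss : s * s ≤ s := by simpa [hxy] using hle y
    nlinarith
  · rintro ⟨h, hh, rfl⟩ y
    calc Complex.normSq (star (S *ᵥ h) ⬝ᵥ y) = Complex.normSq (star h ⬝ᵥ (Sᴴ *ᵥ y)) := by
          rw [star_mulVec, ← dotProduct_mulVec]
      _ ≤ (∑ i, Complex.normSq (h i)) * ∑ i, Complex.normSq ((Sᴴ *ᵥ y) i) :=
          normSq_star_dotProduct_le _ _
      _ ≤ ∑ i, Complex.normSq ((Sᴴ *ᵥ y) i) :=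
          mul_le_of_le_one_left (Finset.sum_nonneg fun i _ => Complex.normSq_nonneg _) hh

end Matrix

/-- For a positive semidefinite `M` and vector `x`, one has
`M ≥ |x⟩⟨x|` iff there is a vector `h` with `⟨h|h⟩ ≤ 1` and `√M h = x`. -/
theorem psd_ge_rankOne_iff {n : ℕ} (M : Matrix (Fin n) (Fin n) ℂ)
    (hM : M.PosSemidef) (x : Fin n → ℂ) :
    (M - vecMulVec x (star x)).PosSemidef ↔
      ∃ h : Fin n → ℂ, (∑ i, Complex.normSq (h i)) ≤ 1 ∧ hM.sqrt *ᵥ h = x := by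
  have hS : hM.sqrt * hM.sqrtᴴ = M := by
    rw [hM.posSemidef_sqrt.isHermitian.eq, hM.sqrt_mul_self]
  rw [← posSemidef_mul_conjTranspose_sub_vecMulVec_iff, hS]
end

section
/- Let W be an invertible Hermitian operator on B ⊗ Z such that the partial trace Tr_B W is also invertible, with W positive definite. Then I_A ⊗ W⁻¹ ≥ |Φ⟩⟨Φ| ⊗ (Tr_B W)⁻¹, where |Φ⟩ = Σ_i |i⟩_A ⊗ |i⟩_B is the unnormalized maximally entangled vector on A ⊗ B with dim A = dim B. -/
open Matrix Kronecker
open scoped ComplexOrder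

/-- Partial trace over the first factor `B` of an operator on `B ⊗ Z`. -/
noncomputable def ptraceB {nB nZ : ℕ} (W : Matrix (Fin nB × Fin nZ) (Fin nB × Fin nZ) ℂ) :
    Matrix (Fin nZ) (Fin nZ) ℂ :=
  Matrix.of fun z z' => ∑ b : Fin nB, W (b, z) (b, z')

/-- The unnormalized maximally entangled vector `|Φ⟩ = Σ_i |i⟩|i⟩` on `A ⊗ B`
(`dim A = dim B = n`). -/
def maxEnt (n : ℕ) : Fin n × Fin n → ℂ := fun p => if p.1 = p.2 then 1 else 0

/-!
Write `S = I_A ⊗ W` and let `J = |Φ⟩ ⊗ I_Z : Z → A ⊗ B ⊗ Z`, so that `Jᴴ S J = Tr_B W` and the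
right-hand side is `J (Jᴴ S J)⁻¹ Jᴴ`. For any positive definite `S` and any `J` with `Jᴴ S J`
invertible, `S⁻¹ - J (Jᴴ S J)⁻¹ Jᴴ` is the Schur complement of `Jᴴ S J` in the block matrix
`[[Jᴴ S J, Jᴴ], [J, S⁻¹]]`, whose other Schur complement `Jᴴ S J - Jᴴ S J` vanishes; so the block
matrix, and with it the first Schur complement, is positive semidefinite.
-/

namespace Matrix

variable {𝕜 ι κ : Type*} [RCLike 𝕜] [Fintype ι] [DecidableEq ι] [Fintype κ] [DecidableEq κ]

theorem PosDef.posSemidef_inv_sub_mul_inv_mul_conjTranspose {S : Matrix ι ι 𝕜} (hS : S.PosDef)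
    (J : Matrix ι κ 𝕜) (hT : (Jᴴ * S * J).PosDef) :
    (S⁻¹ - J * (Jᴴ * S * J)⁻¹ * Jᴴ).PosSemidef := by
  let _ := hT.isUnit.invertible
  let _ := hS.isUnit.invertible
  let _ := hS.inv.isUnit.invertible
  have hblock : (fromBlocks (Jᴴ * S * J) Jᴴ Jᴴᴴ S⁻¹).PosSemidef := by
    rw [PosDef.fromBlocks₂₂ _ _ hS.inv, inv_inv_of_invertible, conjTranspose_conjTranspose,
      sub_self]
    exact PosSemidef.zero
  simpa using (PosDef.fromBlocks₁₁ _ _ hT).mp hblock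

end Matrix

def maxEntTensorId (n nZ : ℕ) : Matrix (Fin n × Fin n × Fin nZ) (Fin nZ) ℂ :=
  Matrix.of fun p z => maxEnt n (p.1, p.2.1) * (1 : Matrix (Fin nZ) (Fin nZ) ℂ) p.2.2 z

theorem conjTranspose_maxEntTensorId_mul_one_kronecker_mul {n nZ : ℕ}
    (W : Matrix (Fin n × Fin nZ) (Fin n × Fin nZ) ℂ) :
    (maxEntTensorId n nZ)ᴴ * ((1 : Matrix (Fin n) (Fin n) ℂ) ⊗ₖ W) * maxEntTensorId n nZ =
      ptraceB W := by
  ext z z'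
  simp [mul_apply, maxEntTensorId, maxEnt, ptraceB, Fintype.sum_prod_type, one_apply,
    apply_ite (starRingEnd ℂ), ite_mul]

theorem maxEntTensorId_mul_mul_conjTranspose {n nZ : ℕ} (T : Matrix (Fin nZ) (Fin nZ) ℂ) :
    maxEntTensorId n nZ * T * (maxEntTensorId n nZ)ᴴ =
      Matrix.of (fun (p q : Fin n × Fin n × Fin nZ) =>
        vecMulVec (maxEnt n) (star (maxEnt n)) (p.1, p.2.1) (q.1, q.2.1) * T p.2.2 q.2.2) := by
  ext p q
  simp [mul_apply, maxEntTensorId, maxEnt, vecMulVec_apply, one_apply,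
    apply_ite (starRingEnd ℂ), mul_ite]

theorem id_kron_inv_ge_maxEnt_kron_inv_general {n nZ : ℕ}
    (W : Matrix (Fin n × Fin nZ) (Fin n × Fin nZ) ℂ)
    (hTrBinv : IsUnit (ptraceB W).det) (hW : W.PosDef) :
    ((1 : Matrix (Fin n) (Fin n) ℂ) ⊗ₖ W⁻¹ -
      Matrix.of (fun (p q : Fin n × Fin n × Fin nZ) =>
        vecMulVec (maxEnt n) (star (maxEnt n)) (p.1, p.2.1) (q.1, q.2.1) *
          (ptraceB W)⁻¹ p.2.2 q.2.2)).PosSemidef := by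
  have hS : ((1 : Matrix (Fin n) (Fin n) ℂ) ⊗ₖ W).PosDef := PosDef.one.kronecker hW
  have hJSJ := conjTranspose_maxEntTensorId_mul_one_kronecker_mul W
  have hT : ((maxEntTensorId n nZ)ᴴ * ((1 : Matrix (Fin n) (Fin n) ℂ) ⊗ₖ W) *
      maxEntTensorId n nZ).PosDef :=
    (hS.posSemidef.conjTranspose_mul_mul_same _).posDef_iff_isUnit.mpr
      (by rwa [hJSJ, isUnit_iff_isUnit_det])
  have := hS.posSemidef_inv_sub_mul_inv_mul_conjTranspose _ hT
  rwa [hJSJ, maxEntTensorId_mul_mul_conjTranspose, inv_kronecker, inv_one] at this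

/-- If `W` is an invertible Hermitian (indeed positive definite) operator
on `B ⊗ Z` with `Tr_B W` invertible, then `I_A ⊗ W⁻¹ ≥ |Φ⟩⟨Φ| ⊗ (Tr_B W)⁻¹` in the
Loewner order on `A ⊗ B ⊗ Z`. -/
theorem id_kron_inv_ge_maxEnt_kron_inv {n nZ : ℕ}
    (W : Matrix (Fin n × Fin nZ) (Fin n × Fin nZ) ℂ)
    (hHerm : W.IsHermitian) (hWinv : IsUnit W.det)
    (hTrBinv : IsUnit (ptraceB W).det) (hW : W.PosDef) :
    ((1 : Matrix (Fin n) (Fin n) ℂ) ⊗ₖ W⁻¹ -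
      Matrix.of (fun (p q : Fin n × Fin n × Fin nZ) =>
        vecMulVec (maxEnt n) (star (maxEnt n)) (p.1, p.2.1) (q.1, q.2.1) *
          (ptraceB W)⁻¹ p.2.2 q.2.2)).PosSemidef :=
  id_kron_inv_ge_maxEnt_kron_inv_general W hTrBinv hW
end

section
/- Let G be a compact subgroup of the unitary group on a finite-dimensional Hilbert space A, P = ∫_G U dU (Haar average) and T(ρ) = ∫_G U ρ U† dU. Then for every positive semidefinite ρ, P ρ P† ≤ T(ρ) in the Loewner order. -/
open Matrix MeasureTheory
open scoped ComplexOrder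

attribute [local instance] Matrix.normedAddCommGroup Matrix.normedSpace

/-!
`T(ρ) - P ρ P†` is the average of `(U - P) ρ (U - P)†`: since `P` is the mean of `U` under a
probability measure, this is the "second moment minus squared mean" identity. Each
`(U - P) ρ (U - P)†` is positive semidefinite, and so is their average, since the quadratic
forms `x† A x` commute with integration.
-/

namespace Matrix

/- `Matrix.normedAddCommGroup` induces the product topology only up to unfolding, so instance
search does not find the `ContinuousENorm` that `Integrable` needs. -/
noncomputable instance {m n 𝕜 : Type*} [Fintype m] [Fintype n] [RCLike 𝕜] :
    ContinuousENorm (Matrix m n 𝕜) :=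
  SeminormedAddGroup.toContinuousENorm

variable {α : Type*} [MeasurableSpace α] {μ : Measure α} {n : Type*} [Fintype n]
  {𝕜 : Type*} [RCLike 𝕜] {f : α → Matrix n n 𝕜}

theorem integral_conjTranspose (f : α → Matrix n n 𝕜) :
    ∫ a, (f a)ᴴ ∂μ = (∫ a, f a ∂μ)ᴴ :=
  (starL' ℝ).integral_comp_comm f

theorem integral_mul_const (hf : Integrable f μ) (B : Matrix n n 𝕜) :
    ∫ a, f a * B ∂μ = (∫ a, f a ∂μ) * B :=
  (LinearMap.toContinuousLinearMap (LinearMap.mulRight 𝕜 B)).integral_comp_comm hf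

theorem integral_const_mul (hf : Integrable f μ) (B : Matrix n n 𝕜) :
    ∫ a, B * f a ∂μ = B * ∫ a, f a ∂μ :=
  (LinearMap.toContinuousLinearMap (LinearMap.mulLeft 𝕜 B)).integral_comp_comm hf

theorem integral_dotProduct_mulVec (hf : Integrable f μ) (x : n → 𝕜) :
    ∫ a, star x ⬝ᵥ (f a *ᵥ x) ∂μ = star x ⬝ᵥ ((∫ a, f a ∂μ) *ᵥ x) :=
  let quadForm : Matrix n n 𝕜 →ₗ[𝕜] 𝕜 :=
    { toFun A := star x ⬝ᵥ (A *ᵥ x)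
      map_add' A B := by simp only [add_mulVec, dotProduct_add]
      map_smul' c A := by simp only [smul_mulVec, dotProduct_smul, RingHom.id_apply] }
  (LinearMap.toContinuousLinearMap quadForm).integral_comp_comm hf

theorem posSemidef_integral (hf : ∀ a, (f a).PosSemidef) : (∫ a, f a ∂μ).PosSemidef := by
  by_cases hint : Integrable f μ
  · refine .of_dotProduct_mulVec_nonneg ?_ fun x => ?_
    · simp only [IsHermitian, ← integral_conjTranspose, fun a => (hf a).isHermitian.eq]
    · rw [← integral_dotProduct_mulVec hint]
      exact integral_nonneg fun a => (hf a).dotProduct_mulVec_nonneg x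
  · simpa only [integral_undef hint] using PosSemidef.zero

theorem integral_mul_mul_conjTranspose_sub_integral [IsProbabilityMeasure μ]
    (hf : Integrable f μ) (ρ : Matrix n n 𝕜)
    (hfρ : Integrable (fun a => f a * ρ * (f a)ᴴ) μ) :
    ∫ a, (f a - ∫ b, f b ∂μ) * ρ * (f a - ∫ b, f b ∂μ)ᴴ ∂μ =
      ∫ a, f a * ρ * (f a)ᴴ ∂μ - (∫ a, f a ∂μ) * ρ * (∫ a, f a ∂μ)ᴴ := by
  set P := ∫ a, f a ∂μ
  have hfH : Integrable (fun a => (f a)ᴴ) μ :=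
    (starL' ℝ : Matrix n n 𝕜 ≃L[ℝ] _).toContinuousLinearMap.integrable_comp hf
  have hleft : Integrable (fun a => f a * (ρ * Pᴴ)) μ :=
    (LinearMap.toContinuousLinearMap (LinearMap.mulRight 𝕜 (ρ * Pᴴ))).integrable_comp hf
  have hright : Integrable (fun a => P * ρ * (f a)ᴴ) μ :=
    (LinearMap.toContinuousLinearMap (LinearMap.mulLeft 𝕜 (P * ρ))).integrable_comp hfH
  have expand : ∀ a, (f a - P) * ρ * (f a - P)ᴴ =
      (f a * ρ * (f a)ᴴ - f a * (ρ * Pᴴ)) - (P * ρ * (f a)ᴴ - P * ρ * Pᴴ) := by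
    intro a
    simp only [conjTranspose_sub]
    noncomm_ring
  simp only [expand]
  rw [integral_sub ?_ ?_, integral_sub hfρ hleft,
    integral_sub hright (integrable_const _), integral_mul_const hf, integral_const_mul hfH,
    integral_conjTranspose, integral_const, probReal_univ, one_smul]
  · noncomm_ring
  · exact hfρ.sub hleft
  · exact hright.sub (integrable_const _)

theorem posSemidef_integral_mul_mul_conjTranspose_sub [IsProbabilityMeasure μ]
    (hf : Integrable f μ) {ρ : Matrix n n 𝕜} (hρ : ρ.PosSemidef)
    (hfρ : Integrable (fun a => f a * ρ * (f a)ᴴ) μ) :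
    (∫ a, f a * ρ * (f a)ᴴ ∂μ - (∫ a, f a ∂μ) * ρ * (∫ a, f a ∂μ)ᴴ).PosSemidef := by
  rw [← integral_mul_mul_conjTranspose_sub_integral hf ρ hfρ]
  exact posSemidef_integral fun a => hρ.mul_mul_conjTranspose_same _

end Matrix

theorem haarAverage_conj_le_twirl_general {n : ℕ} {G : Type*} [Group G] [TopologicalSpace G]
    [CompactSpace G] [MeasurableSpace G] [BorelSpace G]
    (μ : Measure G) [IsProbabilityMeasure μ]
    (π : G →* Matrix.unitaryGroup (Fin n) ℂ)
    (hcont : Continuous fun g => (π g : Matrix (Fin n) (Fin n) ℂ))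
    (ρ : Matrix (Fin n) (Fin n) ℂ) (hρ : ρ.PosSemidef) :
    ((∫ g, (π g : Matrix (Fin n) (Fin n) ℂ) * ρ * ((π g : Matrix (Fin n) (Fin n) ℂ))ᴴ ∂μ) -
      (∫ g, (π g : Matrix (Fin n) (Fin n) ℂ) ∂μ) * ρ *
        (∫ g, (π g : Matrix (Fin n) (Fin n) ℂ) ∂μ)ᴴ).PosSemidef := by
  have integrable {f : G → Matrix (Fin n) (Fin n) ℂ} (hf : Continuous f) : Integrable f μ :=
    hf.integrable_of_hasCompactSupport (.of_compactSpace f)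
  exact posSemidef_integral_mul_mul_conjTranspose_sub (integrable hcont) hρ
    (integrable ((hcont.matrix_mul continuous_const).matrix_mul hcont.matrix_conjTranspose))

/-- Let `G` be a compact group acting by unitaries on `ℂⁿ` via `π`,
`P = ∫ U dU` the Haar average and `T(ρ) = ∫ U ρ U† dU` the twirl. Then for every positive
semidefinite `ρ`, `P ρ P† ≤ T(ρ)` in the Loewner order. -/
theorem haarAverage_conj_le_twirl {n : ℕ} {G : Type*} [Group G] [TopologicalSpace G]
    [IsTopologicalGroup G] [CompactSpace G] [MeasurableSpace G] [BorelSpace G]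
    (μ : Measure G) [μ.IsHaarMeasure] [IsProbabilityMeasure μ]
    (π : G →* Matrix.unitaryGroup (Fin n) ℂ)
    (hcont : Continuous fun g => (π g : Matrix (Fin n) (Fin n) ℂ))
    (ρ : Matrix (Fin n) (Fin n) ℂ) (hρ : ρ.PosSemidef) :
    ((∫ g, (π g : Matrix (Fin n) (Fin n) ℂ) * ρ * ((π g : Matrix (Fin n) (Fin n) ℂ))ᴴ ∂μ) -
      (∫ g, (π g : Matrix (Fin n) (Fin n) ℂ) ∂μ) * ρ *
        (∫ g, (π g : Matrix (Fin n) (Fin n) ℂ) ∂μ)ᴴ).PosSemidef :=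
  haarAverage_conj_le_twirl_general μ π hcont ρ hρ
end

section
/- Let S₀ ⊆ L(A) be a unital C*-algebra and P the projector onto a subspace of A such that P is maximal among projectors satisfying P L(A) P ⊆ S for an S₀-graph S. Then P commutes with every element of S₀, i.e., P lies in the commutant S₀'. -/
/-!
Let `W = span (S₀ · P(A))` and let `Q` be the orthogonal projector onto `W`. For `u = K P x` and
`v = L P y` with `K, L ∈ S₀`, the rank-one map `u v*` equals `K (P (x y*) P) L*`, so it lies in
`S₀ S S₀ = S`; as `Q X Q` is a combination of such rank-one maps, `Q` is `S`-full. Since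
`P(A) ⊆ W`, maximality forces `Q = P`, i.e. `K P = P K P` for every `K ∈ S₀`. Applying this to
`K*` and taking adjoints gives `P K = P K P = K P`.
-/

open Matrix

variable {n : ℕ}

/-- `S₀ T S₀`: the span of products `K X L` with `K, L ∈ S₀` and `X ∈ T`. -/
noncomputable def bimodSpan (S₀ : StarSubalgebra ℂ (Matrix (Fin n) (Fin n) ℂ))
    (T : Submodule ℂ (Matrix (Fin n) (Fin n) ℂ)) :
    Submodule ℂ (Matrix (Fin n) (Fin n) ℂ) :=
  Submodule.span ℂ {z | ∃ k ∈ S₀, ∃ x ∈ T, ∃ l ∈ S₀, z = k * x * l}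

open WithLp

section RankOne

variable {R ι : Type*} [CommRing R] [StarRing R] {S : Submodule R (Matrix ι ι R)}

theorem vecMulVec_star_mem_of_mem_span {s : Set (ι → R)}
    (hs : ∀ u ∈ s, ∀ v ∈ s, vecMulVec u (star v) ∈ S) {u v : ι → R}
    (hu : u ∈ Submodule.span R s) (hv : v ∈ Submodule.span R s) : vecMulVec u (star v) ∈ S := by
  induction hu using Submodule.span_induction with
  | mem u hu =>
    induction hv using Submodule.span_induction with
    | mem v hv => exact hs u hu v hv
    | zero => simp
    | add v w _ _ hv hw => simpa [vecMulVec_add] using S.add_mem hv hw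
    | smul c v _ hv => simpa [vecMulVec_smul] using S.smul_mem (star c) hv
  | zero => simp
  | add u w _ _ hu hw => simpa [add_vecMulVec] using S.add_mem hu hw
  | smul c u _ hu => simpa [smul_vecMulVec] using S.smul_mem c hu

variable [Fintype ι] [DecidableEq ι]

theorem mul_mul_conjTranspose_eq_sum_vecMulVec (A X B : Matrix ι ι R) :
    A * X * Bᴴ = ∑ i, ∑ j, X i j •
      vecMulVec (A *ᵥ Pi.single i 1) (star (B *ᵥ Pi.single j 1)) := by
  conv_lhs => rw [matrix_eq_sum_single X]
  simp only [Finset.mul_sum, Finset.sum_mul]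
  refine Finset.sum_congr rfl fun i _ => Finset.sum_congr rfl fun j _ => ?_
  have hsingle : single i j (X i j) = X i j • vecMulVec (Pi.single i 1) (Pi.single j 1) := by
    rw [← single_eq_single_vecMulVec_single, smul_single, smul_eq_mul, mul_one]
  rw [hsingle, mul_smul_comm, smul_mul_assoc, mul_vecMulVec, vecMulVec_mul, vecMul_conjTranspose,
    ← Pi.single_star, star_one]

theorem mul_mul_conjTranspose_mem_of_vecMulVec_mem {s : Set (ι → R)}
    (hs : ∀ u ∈ s, ∀ v ∈ s, vecMulVec u (star v) ∈ S) {A B : Matrix ι ι R}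
    (hA : ∀ x, A *ᵥ x ∈ s) (hB : ∀ x, B *ᵥ x ∈ s) (X : Matrix ι ι R) : A * X * Bᴴ ∈ S := by
  rw [mul_mul_conjTranspose_eq_sum_vecMulVec]
  exact S.sum_mem fun i _ => S.sum_mem fun j _ => S.smul_mem _ (hs _ (hA _) _ (hB _))

end RankOne

section StarProjectionMatrix

variable {𝕜 ι : Type*} [RCLike 𝕜] [Fintype ι] [DecidableEq ι]

noncomputable def Submodule.starProjectionMatrix (W : Submodule 𝕜 (ι → 𝕜)) : Matrix ι ι 𝕜 :=
  (toEuclideanCLM (n := ι) (𝕜 := 𝕜)).symm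
    (W.comap (WithLp.linearEquiv 2 𝕜 (ι → 𝕜)).toLinearMap).starProjection

namespace Submodule

variable (W : Submodule 𝕜 (ι → 𝕜))

theorem isStarProjection_starProjectionMatrix : IsStarProjection W.starProjectionMatrix :=
  isStarProjection_starProjection.map (toEuclideanCLM (n := ι) (𝕜 := 𝕜)).symm

theorem starProjectionMatrix_mulVec (x : ι → 𝕜) : W.starProjectionMatrix *ᵥ x =
    ofLp ((W.comap (WithLp.linearEquiv 2 𝕜 (ι → 𝕜)).toLinearMap).starProjection (toLp 2 x)) := by
  rw [starProjectionMatrix, ← ofLp_toEuclideanCLM, StarAlgEquiv.apply_symm_apply]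

theorem starProjectionMatrix_mulVec_mem (x : ι → 𝕜) : W.starProjectionMatrix *ᵥ x ∈ W := by
  rw [starProjectionMatrix_mulVec]
  exact starProjection_apply_mem (W.comap (WithLp.linearEquiv 2 𝕜 (ι → 𝕜)).toLinearMap) _

theorem starProjectionMatrix_mulVec_of_mem {x : ι → 𝕜} (hx : x ∈ W) :
    W.starProjectionMatrix *ᵥ x = x := by
  rw [starProjectionMatrix_mulVec, starProjection_eq_self_iff.2 (by exact hx)]

theorem starProjectionMatrix_mul_of_mulVec_mem {M : Matrix ι ι 𝕜} (hM : ∀ x, M *ᵥ x ∈ W) :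
    W.starProjectionMatrix * M = M :=
  ext_iff_mulVec.2 fun x => by rw [← mulVec_mulVec, W.starProjectionMatrix_mulVec_of_mem (hM x)]

theorem starProjectionMatrix_mul_mul_mem {S : Submodule 𝕜 (Matrix ι ι 𝕜)}
    (hS : ∀ u ∈ W, ∀ v ∈ W, vecMulVec u (star v) ∈ S) (X : Matrix ι ι 𝕜) :
    W.starProjectionMatrix * X * W.starProjectionMatrix ∈ S := by
  have hself : W.starProjectionMatrixᴴ = W.starProjectionMatrix :=
    W.isStarProjection_starProjectionMatrix.isSelfAdjoint
  simpa only [hself] using mul_mul_conjTranspose_mem_of_vecMulVec_mem hS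
    W.starProjectionMatrix_mulVec_mem W.starProjectionMatrix_mulVec_mem X

end Submodule

end StarProjectionMatrix

theorem commute_of_mul_mul_eq {R : Type*} [Semigroup R] [StarMul R] {P Y : R}
    (hP : IsSelfAdjoint P) (h : P * Y * P = Y * P) (h' : P * star Y * P = star Y * P) :
    Commute P Y := by
  have h'' := congrArg star h'
  simp only [star_mul, star_star, hP.star_eq, ← mul_assoc] at h''
  calc P * Y = P * Y * P := h''.symm
    _ = Y * P := h

theorem vecMulVec_star_mulVec_mem_of_bimodSpan_le {S : Submodule ℂ (Matrix (Fin n) (Fin n) ℂ)}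
    {S₀ : StarSubalgebra ℂ (Matrix (Fin n) (Fin n) ℂ)} (hbimod : bimodSpan S₀ S ≤ S)
    {P : Matrix (Fin n) (Fin n) ℂ} (hPh : Pᴴ = P) (hfull : ∀ X, P * X * P ∈ S)
    {K L : Matrix (Fin n) (Fin n) ℂ} (hK : K ∈ S₀) (hL : L ∈ S₀) (x y : Fin n → ℂ) :
    vecMulVec ((K * P) *ᵥ x) (star ((L * P) *ᵥ y)) ∈ S := by
  have hfactor : vecMulVec ((K * P) *ᵥ x) (star ((L * P) *ᵥ y)) =
      K * (P * vecMulVec x (star y) * P) * Lᴴ := by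
    rw [star_mulVec, conjTranspose_mul, hPh, ← mulVec_mulVec, ← vecMul_vecMul, ← mul_vecMulVec,
      ← mul_vecMulVec, ← vecMulVec_mul, ← vecMulVec_mul]
    simp only [Matrix.mul_assoc]
  rw [hfactor]
  exact hbimod (Submodule.subset_span ⟨K, hK, _, hfull _, Lᴴ, star_mem hL, rfl⟩)

theorem maximal_full_projector_mem_commutant_general
    (S : Submodule ℂ (Matrix (Fin n) (Fin n) ℂ))
    (S₀ : StarSubalgebra ℂ (Matrix (Fin n) (Fin n) ℂ))
    (hbimod : bimodSpan S₀ S = S)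
    (P : Matrix (Fin n) (Fin n) ℂ) (hPh : Pᴴ = P)
    (hfull : ∀ X : Matrix (Fin n) (Fin n) ℂ, P * X * P ∈ S)
    (hmax : ∀ Q : Matrix (Fin n) (Fin n) ℂ, Qᴴ = Q → Q * Q = Q →
      (∀ X : Matrix (Fin n) (Fin n) ℂ, Q * X * Q ∈ S) → Q * P = P → Q = P) :
    ∀ Y ∈ S₀, P * Y = Y * P := by
  set W := Submodule.span ℂ {v | ∃ K ∈ S₀, ∃ x, (K * P) *ᵥ x = v}
  have hWfix : ∀ K ∈ S₀, W.starProjectionMatrix * (K * P) = K * P := fun K hK =>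
    W.starProjectionMatrix_mul_of_mulVec_mem fun x => Submodule.subset_span ⟨K, hK, x, rfl⟩
  have hQfull : ∀ X, W.starProjectionMatrix * X * W.starProjectionMatrix ∈ S :=
    W.starProjectionMatrix_mul_mul_mem fun u hu v hv =>
      vecMulVec_star_mem_of_mem_span (by
        rintro _ ⟨K, hK, x, rfl⟩ _ ⟨L, hL, y, rfl⟩
        exact vecMulVec_star_mulVec_mem_of_bimodSpan_le hbimod.le hPh hfull hK hL x y) hu hv
  have hQ : W.starProjectionMatrix = P :=
    hmax _ W.isStarProjection_starProjectionMatrix.isSelfAdjoint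
      W.isStarProjection_starProjectionMatrix.isIdempotentElem hQfull
      (by simpa using hWfix 1 (one_mem S₀))
  intro Y hY
  refine (commute_of_mul_mul_eq hPh ?_ ?_).eq
  · simpa [hQ, Matrix.mul_assoc] using hWfix Y hY
  · simpa [hQ, Matrix.mul_assoc] using hWfix (star Y) (star_mem hY)

/-- If `P` is a maximal `S`-full projector (`P L(A) P ⊆ S`) of an
`S₀`-graph `S`, then `P` commutes with every element of `S₀`, i.e. `P ∈ S₀'`. -/
theorem maximal_full_projector_mem_commutant
    (S : Submodule ℂ (Matrix (Fin n) (Fin n) ℂ))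
    (S₀ : StarSubalgebra ℂ (Matrix (Fin n) (Fin n) ℂ))
    (hSstar : ∀ X ∈ S, Xᴴ ∈ S) (hone : (1 : Matrix (Fin n) (Fin n) ℂ) ∈ S)
    (hsub : S₀.toSubmodule ≤ S) (hbimod : bimodSpan S₀ S = S)
    (P : Matrix (Fin n) (Fin n) ℂ) (hPh : Pᴴ = P) (hPP : P * P = P)
    (hfull : ∀ X : Matrix (Fin n) (Fin n) ℂ, P * X * P ∈ S)
    (hmax : ∀ Q : Matrix (Fin n) (Fin n) ℂ, Qᴴ = Q → Q * Q = Q →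
      (∀ X : Matrix (Fin n) (Fin n) ℂ, Q * X * Q ∈ S) → Q * P = P → Q = P) :
    ∀ Y ∈ S₀, P * Y = Y * P :=
  maximal_full_projector_mem_commutant_general S S₀ hbimod P hPh hfull hmax
end

section
/- Let C ⊆ Herm(A) be a convex corner with dim A > 1. If C has a facet (a codimension-1 face cut out by a single supporting hyperplane), then C contains a positive definite element. -/
open Matrix
open scoped ComplexOrder

/-- A convex corner: a nonempty closed convex hereditary subset of the PSD cone. -/
def IsConvexCorner {n : ℕ} (C : Set (Matrix (Fin n) (Fin n) ℂ)) : Prop :=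
  C.Nonempty ∧ IsClosed C ∧ Convex ℝ C ∧ (∀ A ∈ C, A.PosSemidef) ∧
    ∀ A ∈ C, ∀ B : Matrix (Fin n) (Fin n) ℂ, B.PosSemidef → (A - B).PosSemidef → B ∈ C

/-- The anti-blocker `X♯ = {B ≥ 0 : Tr(AB) ≤ 1 for all A ∈ X}`. -/
def antiBlocker {n : ℕ} (C : Set (Matrix (Fin n) (Fin n) ℂ)) :
    Set (Matrix (Fin n) (Fin n) ℂ) :=
  {B | B.PosSemidef ∧ ∀ A ∈ C, ((A * B).trace).re ≤ 1}

/-!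
Suppose no element of `C` is positive definite, and let `F = {X ∈ C : Re Tr(XY) = α}`. Since
the kernel of a positive combination of PSD matrices is the intersection of their kernels, the
kernel of a point of the convex set `F` of minimal kernel dimension is contained in the kernel
of every point of `F`; so all of `F` annihilates a common vector `v ≠ 0`. The Hermitian matrices
annihilating `v` have codimension at least `2` in the `n²`-dimensional real space of Hermitian
matrices: on it the real-linear map `X ↦ Xv` has rank at least `2`, since `vv*` and `vw* + wv*`
send `v` to positive multiples of `v` and of any `w ⊥ v` (which exists as `n ≥ 2`). Hence `F`
spans an affine space of dimension at most `n² - 2`.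
-/

namespace Matrix

variable {𝕜 ι : Type*} [RCLike 𝕜] [Fintype ι]

theorem PosSemidef.mulVec_eq_zero_of_smul_add_smul {A B : Matrix ι ι 𝕜}
    (hA : A.PosSemidef) (hB : B.PosSemidef) {a b : ℝ} (ha : 0 < a) (hb : 0 ≤ b) {x : ι → 𝕜}
    (h : (a • A + b • B) *ᵥ x = 0) : A *ᵥ x = 0 := by
  have haA : (a • A).PosSemidef := hA.smul ha.le
  have hbB : (b • B).PosSemidef := hB.smul hb
  have hsum : star x ⬝ᵥ (a • A) *ᵥ x + star x ⬝ᵥ (b • B) *ᵥ x = 0 := by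
    rw [← dotProduct_add, ← add_mulVec, h, dotProduct_zero]
  have haAx : (a • A) *ᵥ x = 0 := (haA.dotProduct_mulVec_zero_iff x).1
    ((add_eq_zero_iff_of_nonneg (haA.dotProduct_mulVec_nonneg x)
      (hbB.dotProduct_mulVec_nonneg x)).1 hsum).1
  rwa [smul_mulVec, smul_eq_zero, or_iff_right ha.ne'] at haAx

theorem PosSemidef.exists_mulVec_eq_zero_of_not_posDef {A : Matrix ι ι 𝕜} (hA : A.PosSemidef)
    (h : ¬A.PosDef) : ∃ v ≠ 0, A *ᵥ v = 0 := by
  classical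
  exact exists_mulVec_eq_zero_iff.2 (by simpa [hA.posDef_iff_det_ne_zero] using h)

theorem exists_forall_mulVec_eq_zero_of_convex {S : Set (Matrix ι ι 𝕜)} (hS : Convex ℝ S)
    (hne : S.Nonempty) (hpsd : ∀ X ∈ S, X.PosSemidef) (hnpd : ∀ X ∈ S, ¬X.PosDef) :
    ∃ v ≠ 0, ∀ X ∈ S, X *ᵥ v = 0 := by
  let kerDim : Matrix ι ι 𝕜 → ℕ := fun X => Module.finrank 𝕜 (LinearMap.ker X.mulVecLin)
  set X₀ := Function.argminOn kerDim S hne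
  have hX₀ : X₀ ∈ S := Function.argminOn_mem kerDim S hne
  obtain ⟨v, hv, hX₀v⟩ := (hpsd X₀ hX₀).exists_mulVec_eq_zero_of_not_posDef (hnpd X₀ hX₀)
  refine ⟨v, hv, fun X hX => ?_⟩
  let Z := (1 / 2 : ℝ) • X₀ + (1 / 2 : ℝ) • X
  have hZ : Z ∈ S := hS hX₀ hX (by norm_num) (by norm_num) (by norm_num)
  have hle : LinearMap.ker Z.mulVecLin ≤ LinearMap.ker X₀.mulVecLin := fun x hx =>
    (hpsd X₀ hX₀).mulVec_eq_zero_of_smul_add_smul (hpsd X hX) (by norm_num) (by norm_num) hx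
  have hker : LinearMap.ker Z.mulVecLin = LinearMap.ker X₀.mulVecLin :=
    Submodule.eq_of_le_of_finrank_le hle (Function.argminOn_le kerDim S hZ)
  have hZv : v ∈ LinearMap.ker Z.mulVecLin := hker ▸ hX₀v
  refine (hpsd X hX).mulVec_eq_zero_of_smul_add_smul (hpsd X₀ hX₀)
    (a := 1 / 2) (b := 1 / 2) (by norm_num) (by norm_num) ?_
  rw [add_comm]
  exact hZv

end Matrix

section ComplexStarModule

variable {A : Type*} [AddCommGroup A] [Module ℂ A] [StarAddMonoid A] [StarModule ℂ A]

theorem finrank_skewAdjoint_eq_finrank_selfAdjoint :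
    Module.finrank ℝ (skewAdjoint A) = Module.finrank ℝ (selfAdjoint A) := by
  refine LinearEquiv.finrank_eq (LinearEquiv.ofBijective skewAdjoint.negISMul ⟨?_, ?_⟩)
  · intro a b hab
    ext
    rw [← skewAdjoint.I_smul_neg_I a, ← skewAdjoint.I_smul_neg_I b, hab]
  · intro a
    refine ⟨⟨Complex.I • (a : A), by simp⟩, ?_⟩
    ext
    simp [smul_smul]

theorem finrank_selfAdjoint_mul_two [FiniteDimensional ℝ A] :
    Module.finrank ℝ (selfAdjoint A) * 2 = Module.finrank ℝ A := by
  have : Module.Finite ℝ (selfAdjoint A) :=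
    Module.Finite.of_injective (selfAdjoint.submodule ℝ A).subtype Subtype.val_injective
  have : Module.Finite ℝ (skewAdjoint A) :=
    Module.Finite.of_injective (skewAdjoint.submodule ℝ A).subtype Subtype.val_injective
  rw [(StarModule.decomposeProdAdjoint ℝ A).finrank_eq, Module.finrank_prod,
    finrank_skewAdjoint_eq_finrank_selfAdjoint]
  ring

end ComplexStarModule

namespace Matrix

variable {ι : Type*} [Fintype ι]

theorem finrank_selfAdjoint_submodule :
    Module.finrank ℝ (selfAdjoint.submodule ℝ (Matrix ι ι ℂ)) = Fintype.card ι ^ 2 := by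
  have h := finrank_selfAdjoint_mul_two (A := Matrix ι ι ℂ)
  rw [← Module.finrank_mul_finrank ℝ ℂ (Matrix ι ι ℂ), Complex.finrank_real_complex,
    Module.finrank_matrix, Module.finrank_self] at h
  change Module.finrank ℝ (selfAdjoint (Matrix ι ι ℂ)) = _
  nlinarith

theorem exists_ne_zero_dotProduct_eq_zero {K : Type*} [Field K] (hι : 2 ≤ Fintype.card ι)
    (u : ι → K) : ∃ w ≠ 0, u ⬝ᵥ w = 0 := by
  have hker := LinearMap.ker_ne_bot_of_finrank_lt (f := dotProductBilin K K u)
    (by rw [Module.finrank_self, Module.finrank_fintype_fun_eq_card]; omega)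
  obtain ⟨w, hw, hw0⟩ := (Submodule.ne_bot_iff _).1 hker
  exact ⟨w, hw0, hw⟩

theorem finrank_selfAdjoint_inf_ker_mulVec_add_two_le (hι : 2 ≤ Fintype.card ι) {v : ι → ℂ}
    (hv : v ≠ 0) :
    Module.finrank ℝ ↥(selfAdjoint.submodule ℝ (Matrix ι ι ℂ) ⊓
      LinearMap.ker ((mulVecBilin ℝ ℂ).flip v)) + 2 ≤ Fintype.card ι ^ 2 := by
  obtain ⟨w, hw, hvw⟩ := exists_ne_zero_dotProduct_eq_zero hι (star v)
  have hwv : star w ⬝ᵥ v = 0 := by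
    have := congrArg star hvw
    rwa [star_dotProduct, star_star, star_zero] at this
  obtain ⟨r, hr, hvv⟩ := RCLike.pos_iff_exists_ofReal.1 (dotProduct_star_self_pos_iff.2 hv)
  set H := selfAdjoint.submodule ℝ (Matrix ι ι ℂ)
  set T := ((mulVecBilin ℝ ℂ).flip v).domRestrict H
  have hv_mem : v ∈ LinearMap.range T := by
    refine (Submodule.smul_mem_iff _ hr.ne').1 ⟨⟨vecMulVec v (star v), ?_⟩, ?_⟩
    · change _ ∈ selfAdjoint _
      simp [selfAdjoint.mem_iff, star_eq_conjTranspose]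
    · simp [T, vecMulVec_mulVec, ← hvv]
  have hw_mem : w ∈ LinearMap.range T := by
    refine (Submodule.smul_mem_iff _ hr.ne').1
      ⟨⟨vecMulVec v (star w) + vecMulVec w (star v), ?_⟩, ?_⟩
    · change _ ∈ selfAdjoint _
      simp [selfAdjoint.mem_iff, star_eq_conjTranspose, add_comm]
    · simp [T, vecMulVec_mulVec, ← hvv, hwv]
  have hind : LinearIndependent ℝ ![v, w] := by
    refine LinearIndependent.pair_iff.2 fun s t hst => ?_
    have hsr : (s : ℂ) * r = 0 := by
      simpa [dotProduct_add, hvw, ← hvv] using congrArg (star v ⬝ᵥ ·) hst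
    have hs : s = 0 := by
      exact_mod_cast (mul_eq_zero.1 hsr).resolve_right (by exact_mod_cast hr.ne')
    subst hs
    simpa [hw] using hst
  have hspan : Submodule.span ℝ (Set.range ![v, w]) ≤ LinearMap.range T :=
    Submodule.span_le.2 (Set.range_subset_iff.2 (Fin.forall_fin_two.2 ⟨hv_mem, hw_mem⟩))
  have hrange := Submodule.finrank_mono hspan
  rw [finrank_span_eq_card hind, Fintype.card_fin] at hrange
  have hker : Module.finrank ℝ ↥(H ⊓ LinearMap.ker ((mulVecBilin ℝ ℂ).flip v)) =
      Module.finrank ℝ (LinearMap.ker T) := by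
    rw [← Submodule.map_comap_subtype, ← LinearMap.ker_domRestrict,
      Submodule.finrank_map_subtype_eq]
  have hnullity := T.finrank_range_add_finrank_ker
  rw [finrank_selfAdjoint_submodule] at hnullity
  omega

end Matrix

theorem Submodule.direction_affineSpan_le_of_subset {k V : Type*} [Ring k] [AddCommGroup V]
    [Module k V] {s : Set V} {p : Submodule k V} (h : s ⊆ p) : (affineSpan k s).direction ≤ p := by
  rw [direction_affineSpan, vectorSpan_def, Submodule.span_le]
  rintro _ ⟨x, hx, y, hy, rfl⟩
  exact p.sub_mem (h hx) (h hy)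

theorem facet_gives_posDef_general {n : ℕ} (hn : 1 < n) (C : Set (Matrix (Fin n) (Fin n) ℂ))
    (hC : IsConvexCorner C) (Y : Matrix (Fin n) (Fin n) ℂ)
    (α : ℝ)
    (hdim : Module.finrank ℝ
      (affineSpan ℝ {X ∈ C | ((X * Y).trace).re = α}).direction = n ^ 2 - 1) :
    ∃ M ∈ C, M.PosDef := by
  obtain ⟨-, -, hconv, hpsd, -⟩ := hC
  set F := {X ∈ C | ((X * Y).trace).re = α}
  by_contra! hnpd
  have hn2 : 1 < n ^ 2 := Nat.one_lt_pow two_ne_zero hn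
  have hFconv : Convex ℝ F := hconv.inter <|
    convex_hyperplane ⟨fun X Z => by simp [add_mul], fun c X => by simp⟩ α
  have hFne : F.Nonempty := by
    rw [Set.nonempty_iff_ne_empty]
    rintro hF
    rw [hF, AffineSubspace.span_empty, AffineSubspace.direction_bot, finrank_bot] at hdim
    omega
  obtain ⟨v, hv, hFv⟩ := exists_forall_mulVec_eq_zero_of_convex hFconv hFne
    (fun X hX => hpsd X hX.1) (fun X hX => hnpd X hX.1)
  have hdir := Submodule.finrank_mono <| Submodule.direction_affineSpan_le_of_subset
    (p := selfAdjoint.submodule ℝ _ ⊓ LinearMap.ker ((mulVecBilin ℝ ℂ).flip v))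
    fun X hX => ⟨(hpsd X hX.1).isHermitian, hFv X hX⟩
  have hker := finrank_selfAdjoint_inf_ker_mulVec_add_two_le (by rw [Fintype.card_fin]; exact hn) hv
  rw [Fintype.card_fin] at hker
  omega

/-- If `dim A > 1` and a convex corner `C` has a facet (a set
`F = {X ∈ C : Tr(XY) = α}` cut out by a supporting hyperplane, of affine dimension
`dim Herm(A) − 1 = n² − 1`), then `C` contains a positive definite element. -/
theorem facet_gives_posDef {n : ℕ} (hn : 1 < n) (C : Set (Matrix (Fin n) (Fin n) ℂ))
    (hC : IsConvexCorner C) (Y : Matrix (Fin n) (Fin n) ℂ) (hY : Y.IsHermitian)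
    (α : ℝ) (hsupp : ∀ X ∈ C, ((X * Y).trace).re ≤ α)
    (hdim : Module.finrank ℝ
      (affineSpan ℝ {X ∈ C | ((X * Y).trace).re = α}).direction = n ^ 2 - 1) :
    ∃ M ∈ C, M.PosDef :=
  facet_gives_posDef_general hn C hC Y α hdim
end

section
/- Every nonzero vertex X of a convex corner C ⊆ PSD(A) is maximal: if Y ≥ X and Y ≠ X then Y ∉ C. (A vertex is a boundary point at which the intersection of all supporting hyperplanes has affine dimension 0.) -/
/-!
Write `D = Y - X`. As `X` and `D` are nonzero and positive semidefinite, `p p* ≤ X` and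
`w w* ≤ D` for some nonzero vectors `p`, `w`. Along the curve
`M t = X + t (p w* + w p*) + 2 t² (w w* - p p*)` both `M t` and `Y - M t` stay positive
semidefinite for `|t| ≤ 1/2`, so `M t ∈ C` by heredity. Hence every supporting functional of `C`
at `X` has a local maximum at `t = 0` along the curve and vanishes on its velocity
`p w* + w p*`, i.e. `X + (p w* + w p*)` lies on every supporting hyperplane at `X`. At a vertex
this forces `p w* + w p* = 0`; the same with `i p` in place of `p` gives `p w* = 0`, which is
absurd.
-/
open Matrix
open scoped ComplexOrder

open Filter Topology

namespace Matrix

variable {n 𝕜 : Type*} [RCLike 𝕜]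

def perturbation (p w : n → 𝕜) (t : ℝ) : Matrix n n 𝕜 :=
  t • (vecMulVec p (star w) + vecMulVec w (star p)) +
    (2 * t ^ 2) • (vecMulVec w (star w) - vecMulVec p (star p))

theorem perturbation_swap_neg (p w : n → 𝕜) (t : ℝ) :
    perturbation w p (-t) = -perturbation p w t := by
  unfold perturbation
  rw [neg_sq]
  module

theorem isHermitian_vecMulVec_add_vecMulVec (p w : n → 𝕜) :
    (vecMulVec p (star w) + vecMulVec w (star p)).IsHermitian := by
  simp [IsHermitian, conjTranspose_vecMulVec, add_comm]

theorem vecMulVec_eq_zero_of_add_eq_zero {p w : n → ℂ}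
    (h : vecMulVec p (star w) + vecMulVec w (star p) = 0)
    (hI : vecMulVec (Complex.I • p) (star w) + vecMulVec w (star (Complex.I • p)) = 0) :
    vecMulVec p (star w) = 0 := by
  ext i j
  have hij := congrFun (congrFun h i) j
  have hIij := congrFun (congrFun hI i) j
  simp only [add_apply, vecMulVec_apply, Pi.star_apply, Pi.smul_apply, smul_eq_mul, star_mul',
    Complex.star_def, Complex.conj_I, zero_apply] at hij hIij ⊢
  -- `a = (a + b) / 2 - (i / 2) (i a - i b)` since `i² = -1`
  linear_combination (1 / 2 : ℂ) * hij - (Complex.I / 2) * hIij +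
    ((p i * (starRingEnd ℂ) (w j) - w i * (starRingEnd ℂ) (p j)) / 2) * Complex.I_sq

variable [Fintype n]

theorem PosSemidef.exists_ne_zero_posSemidef_sub_vecMulVec {A : Matrix n n 𝕜}
    (hA : A.PosSemidef) (hA0 : A ≠ 0) :
    ∃ p ≠ 0, (A - vecMulVec p (star p)).PosSemidef := by
  classical
  obtain ⟨m, v, rfl⟩ := posSemidef_iff_eq_sum_vecMulVec.mp hA
  obtain ⟨k, -, hk⟩ := Finset.exists_ne_zero_of_sum_ne_zero hA0
  refine ⟨v k, fun h => hk (by simp [h]), ?_⟩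
  rw [← Finset.add_sum_erase _ _ (Finset.mem_univ k), add_sub_cancel_left]
  exact posSemidef_sum _ fun i _ => posSemidef_vecMulVec_self_star (v i)

theorem posSemidef_add_perturbation {A : Matrix n n 𝕜} {p : n → 𝕜}
    (hA : (A - vecMulVec p (star p)).PosSemidef) (w : n → 𝕜) {t : ℝ} (ht : 4 * t ^ 2 ≤ 1) :
    (A + perturbation p w t).PosSemidef := by
  set q := p + (2 * t) • w
  have hsplit : A + perturbation p w t = (A - vecMulVec p (star p)) +
      (1 / 2 : ℝ) • vecMulVec q (star q) + (1 / 2 - 2 * t ^ 2 : ℝ) • vecMulVec p (star p) := by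
    simp only [perturbation, q, star_add, star_smul, star_trivial, vecMulVec_add, add_vecMulVec,
      smul_vecMulVec, vecMulVec_smul]
    module
  rw [hsplit]
  refine (hA.add ((posSemidef_vecMulVec_self_star q).smul (by norm_num))).add
    ((posSemidef_vecMulVec_self_star p).smul ?_)
  linarith

end Matrix

section SupportingHyperplanes

variable {ι : Type*} [Fintype ι]

def supportIntersection (C : Set (Matrix ι ι ℂ)) (X : Matrix ι ι ℂ) : Set (Matrix ι ι ℂ) :=
  {Z | Z.IsHermitian ∧ ∀ Y : Matrix ι ι ℂ, Y.IsHermitian → ∀ α : ℝ,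
    (∀ W ∈ C, ((W * Y).trace).re ≤ α) → ((X * Y).trace).re = α → ((Z * Y).trace).re = α}

theorem add_mem_supportIntersection {C : Set (Matrix ι ι ℂ)} {X d E : Matrix ι ι ℂ}
    (hX : X.IsHermitian) (hd : d.IsHermitian)
    (hC : ∀ᶠ t : ℝ in 𝓝 0, X + t • d + t ^ 2 • E ∈ C) :
    X + d ∈ supportIntersection C X := by
  refine ⟨hX.add hd, fun Y _ α hle hXα => ?_⟩
  have htrace : ∀ t : ℝ, ((X + t • d + t ^ 2 • E) * Y).trace.re =
      α + t * (d * Y).trace.re + t ^ 2 * (E * Y).trace.re := by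
    intro t
    simp only [add_mul, Matrix.smul_mul, trace_add, trace_smul, Complex.add_re, Complex.smul_re,
      smul_eq_mul, hXα]
  have hmax : IsLocalMax (fun t : ℝ => α + t * (d * Y).trace.re + t ^ 2 * (E * Y).trace.re) 0 := by
    filter_upwards [hC] with t ht
    simpa [htrace] using hle _ ht
  have hκ : (d * Y).trace.re = 0 := by
    simpa using hmax.hasDerivAt_eq_zero ((((hasDerivAt_id (0 : ℝ)).mul_const _).const_add α).add
      ((hasDerivAt_pow 2 (0 : ℝ)).mul_const _))
  simp [add_mul, trace_add, hXα, hκ]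

theorem vecMulVec_add_eq_zero_of_supportIntersection_eq_singleton {C : Set (Matrix ι ι ℂ)}
    (hC : ∀ A ∈ C, ∀ B : Matrix ι ι ℂ, B.PosSemidef → (A - B).PosSemidef → B ∈ C)
    {X Y : Matrix ι ι ℂ} (hY : Y ∈ C) (hvert : supportIntersection C X = {X}) {p w : ι → ℂ}
    (hXp : (X - vecMulVec p (star p)).PosSemidef)
    (hYw : (Y - X - vecMulVec w (star w)).PosSemidef) :
    vecMulVec p (star w) + vecMulVec w (star p) = 0 := by
  have hX : X.IsHermitian := by
    simpa using hXp.isHermitian.add (posSemidef_vecMulVec_self_star p).isHermitian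
  have hcurve : ∀ t : ℝ, 4 * t ^ 2 ≤ 1 → X + perturbation p w t ∈ C := fun t ht => by
    refine hC Y hY _ (posSemidef_add_perturbation hXp w ht) ?_
    have hYM := posSemidef_add_perturbation hYw p (t := -t) (by rwa [neg_sq])
    rwa [perturbation_swap_neg, ← sub_eq_add_neg, sub_sub] at hYM
  have hmem := add_mem_supportIntersection (E := (2 : ℝ) • (vecMulVec w (star w) -
      vecMulVec p (star p))) hX (isHermitian_vecMulVec_add_vecMulVec p w) <| by
    filter_upwards [Ioo_mem_nhds (by norm_num : (-1 / 2 : ℝ) < 0) (by norm_num : (0 : ℝ) < 1 / 2)]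
      with t ⟨ht₁, ht₂⟩
    convert hcurve t (by nlinarith) using 1
    simp only [perturbation, smul_smul]
    module
  rw [hvert] at hmem
  simpa using hmem

end SupportingHyperplanes

theorem vertex_is_maximal_general {n : ℕ} (C : Set (Matrix (Fin n) (Fin n) ℂ))
    (hC : IsConvexCorner C) (X : Matrix (Fin n) (Fin n) ℂ) (hXC : X ∈ C)
    (hX0 : X ≠ 0)
    (hvert : {Z : Matrix (Fin n) (Fin n) ℂ | Z.IsHermitian ∧
        ∀ Y : Matrix (Fin n) (Fin n) ℂ, Y.IsHermitian → ∀ α : ℝ,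
          (∀ W ∈ C, ((W * Y).trace).re ≤ α) → ((X * Y).trace).re = α →
            ((Z * Y).trace).re = α} = {X}) :
    ∀ Y : Matrix (Fin n) (Fin n) ℂ, (Y - X).PosSemidef → Y ≠ X → Y ∉ C := by
  intro Y hYX hne hY
  obtain ⟨-, -, -, hpsd, hhered⟩ := hC
  obtain ⟨p, hp, hXp⟩ := (hpsd X hXC).exists_ne_zero_posSemidef_sub_vecMulVec hX0
  obtain ⟨w, hw, hYw⟩ := hYX.exists_ne_zero_posSemidef_sub_vecMulVec (sub_ne_zero.mpr hne)
  have hXIp : (X - vecMulVec (Complex.I • p) (star (Complex.I • p))).PosSemidef := by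
    simpa [star_smul, smul_vecMulVec, vecMulVec_smul, smul_smul] using hXp
  have hpw := vecMulVec_eq_zero_of_add_eq_zero
    (vecMulVec_add_eq_zero_of_supportIntersection_eq_singleton hhered hY hvert hXp hYw)
    (vecMulVec_add_eq_zero_of_supportIntersection_eq_singleton hhered hY hvert hXIp hYw)
  rcases vecMulVec_eq_zero.mp hpw with h | h
  · exact hp h
  · exact hw (star_eq_zero.mp h)

/-- Every nonzero vertex `X` of a convex corner `C` (a boundary point
at which the intersection of all supporting hyperplanes, within `Herm(A)`, is the single
point `X`) is maximal: `Y ≥ X` and `Y ≠ X` imply `Y ∉ C`. -/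
theorem vertex_is_maximal {n : ℕ} (C : Set (Matrix (Fin n) (Fin n) ℂ))
    (hC : IsConvexCorner C) (X : Matrix (Fin n) (Fin n) ℂ) (hXC : X ∈ C)
    (hX0 : X ≠ 0) (hbd : X ∈ frontier C)
    (hvert : {Z : Matrix (Fin n) (Fin n) ℂ | Z.IsHermitian ∧
        ∀ Y : Matrix (Fin n) (Fin n) ℂ, Y.IsHermitian → ∀ α : ℝ,
          (∀ W ∈ C, ((W * Y).trace).re ≤ α) → ((X * Y).trace).re = α →
            ((Z * Y).trace).re = α} = {X}) :
    ∀ Y : Matrix (Fin n) (Fin n) ℂ, (Y - X).PosSemidef → Y ≠ X → Y ∉ C :=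
  vertex_is_maximal_general C hC X hXC hX0 hvert
end
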